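/- Every Valdivia compact space K is either scattered or contains a closed subspace which is uncountable and metrizable. -/
import Mathlib


/-- A topological space is scattered if every nonempty subset `S` contains a point
isolated in `S`. -/
def Scattered (X : Type*) [TopologicalSpace X] : Prop :=
  ∀ S : Set X, S.Nonempty → ∃ x ∈ S, ∃ U : Set X, IsOpen U ∧ U ∩ S = {x}

section Aux

open Set Function Topology

lemma aux_uncountable_funs : Uncountable (ℕ → Bool) := by
  rw [uncountable_iff_not_countable]
  intro h
  have : Countable (Set ℕ) :=
    Countable.of_equiv _ (Equiv.arrowCongr (Equiv.refl ℕ) Equiv.propEquivBool.symm)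
  obtain ⟨f, hf⟩ := exists_surjective_nat (Set ℕ)
  exact Function.cantor_surjective f hf

/-- Iterate a binary child operation along a list of booleans. -/
def auxTree {N : Type*} (root : N) (child : N → Bool → N) : List Bool → N
  | [] => root
  | b :: s => child (auxTree root child s) b

/-- The reversed prefix of length `n` of a branch. -/
def auxPre (α : ℕ → Bool) : ℕ → List Bool
  | 0 => []
  | n + 1 => α n :: auxPre α n

lemma auxPre_eq {α β : ℕ → Bool} : ∀ n, (∀ k < n, α k = β k) → auxPre α n = auxPre β n
  | 0, _ => rfl
  | n + 1, h => by
    simp only [auxPre]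
    rw [h n (Nat.lt_succ_self n), auxPre_eq n (fun k hk => h k (hk.trans (Nat.lt_succ_self n)))]

/-- Cantor-scheme construction: if `S` is a nonempty set with no relatively isolated
points in a compact Hausdorff space and `D` is dense, then there is a countable subset
of `D` whose closure is uncountable. -/
lemma aux_cantor {K : Type*} [TopologicalSpace K] [CompactSpace K] [T2Space K]
    {S D : Set K} (hSne : S.Nonempty)
    (hS : ∀ x ∈ S, ∀ U : Set K, IsOpen U → U ∩ S ≠ {x})
    (hD : Dense D) :
    ∃ A : Set K, A.Countable ∧ A ⊆ D ∧ ¬ (closure A).Countable := by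
  classical
  -- regularity helper
  have reg : ∀ (x : K) (U : Set K), IsOpen U → x ∈ U →
      ∃ V : Set K, IsOpen V ∧ x ∈ V ∧ closure V ⊆ U := by
    intro x U hU hx
    obtain ⟨t, ht, htc, hts⟩ := exists_mem_nhds_isClosed_subset (hU.mem_nhds hx)
    exact ⟨interior t, isOpen_interior, mem_interior_iff_mem_nhds.mpr ht,
      (closure_minimal interior_subset htc).trans hts⟩
  have key : ∀ U : Set K, IsOpen U → (U ∩ S).Nonempty →
      ∃ V W : Set K, (IsOpen V ∧ (V ∩ S).Nonempty) ∧ (IsOpen W ∧ (W ∩ S).Nonempty) ∧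
        closure V ⊆ U ∧ closure W ⊆ U ∧ Disjoint (closure V) (closure W) := by
    rintro U hU ⟨x, hxU, hxS⟩
    have hx2 : ∃ y, y ∈ U ∩ S ∧ y ≠ x := by
      by_contra h
      push_neg at h
      exact hS x hxS U hU (Set.eq_singleton_iff_unique_mem.mpr ⟨⟨hxU, hxS⟩, h⟩)
    obtain ⟨y, ⟨hyU, hyS⟩, hyx⟩ := hx2
    obtain ⟨u, v, hu, hv, hyu, hxv, huv⟩ := t2_separation hyx
    obtain ⟨V, hVo, hxV, hVsub⟩ := reg x (U ∩ v) (hU.inter hv) ⟨hxU, hxv⟩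
    obtain ⟨W, hWo, hyW, hWsub⟩ := reg y (U ∩ u) (hU.inter hu) ⟨hyU, hyu⟩
    refine ⟨V, W, ⟨hVo, ⟨x, hxV, hxS⟩⟩, ⟨hWo, ⟨y, hyW, hyS⟩⟩,
      hVsub.trans Set.inter_subset_left, hWsub.trans Set.inter_subset_left, ?_⟩
    exact Set.disjoint_of_subset (hVsub.trans Set.inter_subset_right)
      (hWsub.trans Set.inter_subset_right) huv.symm
  -- nodes of the Cantor scheme
  let Node := {U : Set K // IsOpen U ∧ (U ∩ S).Nonempty}
  have key' : ∀ n : Node, ∃ p : Node × Node,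
      closure p.1.1 ⊆ n.1 ∧ closure p.2.1 ⊆ n.1 ∧
        Disjoint (closure p.1.1) (closure p.2.1) := by
    intro n
    obtain ⟨V, W, hV, hW, hVU, hWU, hdisj⟩ := key n.1 n.2.1 n.2.2
    exact ⟨(⟨V, hV⟩, ⟨W, hW⟩), hVU, hWU, hdisj⟩
  choose childP h1 h2 h3 using key'
  let childB : Node → Bool → Node := fun n b => cond b (childP n).1 (childP n).2
  have hstep : ∀ (n : Node) (b : Bool), closure (childB n b).1 ⊆ n.1 := by
    intro n b
    cases b
    · exact h2 n
    · exact h1 n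
  have hdisjB : ∀ (n : Node) (b b' : Bool), b ≠ b' →
      Disjoint (closure (childB n b).1) (closure (childB n b').1) := by
    intro n b b' hbb
    cases b <;> cases b'
    · exact absurd rfl hbb
    · exact (h3 n).symm
    · exact h3 n
    · exact absurd rfl hbb
  let root : Node := ⟨Set.univ, isOpen_univ, by simpa using hSne⟩
  let nodeL : List Bool → Node := auxTree root childB
  have nodeL_cons : ∀ (b : Bool) (s : List Bool),
      nodeL (b :: s) = childB (nodeL s) b := fun _ _ => rfl
  -- pick a point of D in each node
  have pick : ∀ n : Node, ∃ x, x ∈ D ∧ x ∈ n.1 := by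
    intro n
    obtain ⟨x, hx1, hx2⟩ := hD.exists_mem_open n.2.1 ⟨n.2.2.choose, n.2.2.choose_spec.1⟩
    exact ⟨x, hx1, hx2⟩
  choose d hdD hdU using pick
  refine ⟨Set.range (fun s : List Bool => d (nodeL s)), Set.countable_range _,
    by rintro _ ⟨s, rfl⟩; exact hdD _, ?_⟩
  set A : Set K := Set.range (fun s : List Bool => d (nodeL s)) with hA
  intro hC
  -- the closed sets along a branch
  have hsub1 : ∀ (α : ℕ → Bool) (n : ℕ),
      (nodeL (auxPre α (n + 1))).1 ⊆ (nodeL (auxPre α n)).1 := by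
    intro α n
    have : nodeL (auxPre α (n + 1)) = childB (nodeL (auxPre α n)) (α n) := rfl
    rw [this]
    exact subset_closure.trans (hstep _ _)
  have hFne : ∀ (α : ℕ → Bool) (n : ℕ), ((nodeL (auxPre α n)).1 ∩ A).Nonempty := by
    intro α n
    exact ⟨d (nodeL (auxPre α n)), hdU _, ⟨auxPre α n, rfl⟩⟩
  have hpt : ∀ α : ℕ → Bool, ∃ x, x ∈ ⋂ n, closure ((nodeL (auxPre α n)).1 ∩ A) := by
    intro α
    apply IsCompact.nonempty_iInter_of_sequence_nonempty_isCompact_isClosed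
    · intro n
      exact closure_mono (Set.inter_subset_inter_left _ (hsub1 α n))
    · intro n
      exact (hFne α n).mono subset_closure
    · exact isClosed_closure.isCompact
    · intro n
      exact isClosed_closure
  choose p hp using hpt
  have hpC : ∀ α, p α ∈ closure A := by
    intro α
    have := Set.mem_iInter.mp (hp α) 0
    exact closure_mono Set.inter_subset_right this
  have hpN : ∀ (α : ℕ → Bool) (n : ℕ), p α ∈ closure (nodeL (auxPre α n)).1 := by
    intro α n
    exact closure_mono Set.inter_subset_left (Set.mem_iInter.mp (hp α) n)
  have hpinj : Function.Injective p := by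
    intro α β hpe
    by_contra hne
    have hex : ∃ k, α k ≠ β k := by
      by_contra h
      push_neg at h
      exact hne (funext h)
    set n := Nat.find hex with hn
    have hdiff : α n ≠ β n := Nat.find_spec hex
    have hmin : ∀ k < n, α k = β k := fun k hk => not_not.mp (Nat.find_min hex hk)
    have hpre : auxPre α n = auxPre β n := auxPre_eq n hmin
    have hα : p α ∈ closure (childB (nodeL (auxPre α n)) (α n)).1 := hpN α (n + 1)
    have hβ : p β ∈ closure (childB (nodeL (auxPre α n)) (β n)).1 := by
      have := hpN β (n + 1)
      rwa [show auxPre β (n + 1) = β n :: auxPre β n from rfl, ← hpre] at this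
    exact Set.disjoint_left.mp (hdisjB (nodeL (auxPre α n)) (α n) (β n) hdiff) hα
      (hpe ▸ hβ)
  haveI := hC.to_subtype
  haveI := aux_uncountable_funs
  have : Countable (ℕ → Bool) :=
    Function.Injective.countable (f := fun α => (⟨p α, hpC α⟩ : closure A))
      (fun a b h => hpinj (congrArg Subtype.val h))
  exact not_countable this

end Aux

/-- Every Valdivia compact space is either scattered or contains a closed subspace which is
uncountable and metrizable. `K` is Valdivia if for some `Γ` it embeds into `ℝ^Γ` in such a
way that the image meets the `Σ`-product (functions with countable support) in a dense
subset of the image. -/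
theorem statement2.{u} (K : Type u) [TopologicalSpace K] [CompactSpace K] [T2Space K]
    (hValdivia : ∃ (Γ : Type u) (i : K → (Γ → ℝ)), Topology.IsEmbedding i ∧
      ∀ y ∈ Set.range i,
        y ∈ closure (Set.range i ∩ {x : Γ → ℝ | (Function.support x).Countable})) :
    Scattered K ∨
      ∃ C : Set K, IsClosed C ∧ ¬ C.Countable ∧ TopologicalSpace.MetrizableSpace C := by
  classical
  by_cases hsc : Scattered K
  · exact Or.inl hsc
  right
  obtain ⟨Γ, i, hi, hdense⟩ := hValdivia
  set D : Set K := {x | (Function.support (i x)).Countable} with hDdef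
  have hDdense : Dense D := by
    intro x
    have him : i '' D = Set.range i ∩ {y : Γ → ℝ | (Function.support y).Countable} := by
      ext y
      constructor
      · rintro ⟨z, hz, rfl⟩
        exact ⟨⟨z, rfl⟩, hz⟩
      · rintro ⟨⟨z, rfl⟩, hz⟩
        exact ⟨z, hz, rfl⟩
    rw [hi.closure_eq_preimage_closure_image D, Set.mem_preimage, him]
    exact hdense _ ⟨x, rfl⟩
  unfold Scattered at hsc
  push_neg at hsc
  obtain ⟨S, hSne, hS⟩ := hsc
  have hS' : ∀ x ∈ S, ∀ U : Set K, IsOpen U → U ∩ S ≠ {x} := by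
    intro x hx U hU
    exact hS x hx U hU
  obtain ⟨A, hAc, hAD, hunc⟩ := aux_cantor hSne hS' hDdense
  refine ⟨closure A, isClosed_closure, hunc, ?_⟩
  set Γ₀ : Set Γ := ⋃ x ∈ A, Function.support (i x) with hΓ₀def
  have hΓ₀c : Γ₀.Countable := Set.Countable.biUnion hAc (fun x hx => hAD hx)
  have hzero : ∀ x ∈ closure A, ∀ γ, γ ∉ Γ₀ → i x γ = 0 := by
    intro x hx γ hγ
    have hcl : IsClosed {z : K | i z γ = 0} :=
      isClosed_eq ((continuous_apply γ).comp hi.continuous) continuous_const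
    have hA' : A ⊆ {z : K | i z γ = 0} := by
      intro a ha
      by_contra h
      exact hγ (Set.mem_biUnion ha h)
    exact closure_minimal hA' hcl hx
  haveI : CompactSpace (closure A) :=
    isCompact_iff_compactSpace.mp isClosed_closure.isCompact
  haveI := hΓ₀c.to_subtype
  let e : closure A → (↥Γ₀ → ℝ) := fun x γ => i x.1 γ.1
  have hcont : Continuous e :=
    continuous_pi fun γ => ((continuous_apply γ.1).comp hi.continuous).comp
      continuous_subtype_val
  have hinj : Function.Injective e := by
    intro x y h
    apply Subtype.ext
    apply hi.injective
    funext γ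
    by_cases hγ : γ ∈ Γ₀
    · exact congrFun h ⟨γ, hγ⟩
    · rw [hzero _ x.2 γ hγ, hzero _ y.2 γ hγ]
  exact (hcont.isClosedEmbedding hinj).isEmbedding.metrizableSpace
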